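/- Let X₁ be a Rademacher random variable and X₂ an exponential random variable with rate 1, independent of X₁. Let X̂ = (X₁ + X₂)/√2, F_X̂ the cumulative distribution function of X̂, and Ŷ = F_X̂(X̂). Then cov(X₂, Ŷ) = (3e^{−2} + 1)/8. -/

import Mathlib

open MeasureTheory ProbabilityTheory
open scoped NNReal ENNReal

open Real Set Filter

/-- `G` is the cumulative distribution function of the exponential distribution with
rate 1: `G(z) = 1 - exp(-z)` for `z ≥ 0` and `G(z) = 0` for `z < 0`. -/
noncomputable def G (z : ℝ) : ℝ := if 0 ≤ z then 1 - Real.exp (-z) else 0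


lemma tendB (a : ℝ) (ha : 0 < a) :
    Tendsto (fun x : ℝ => -((x/a + 1/a^2) * Real.exp (-(a*x)))) atTop (nhds 0) := by
  have hA : Tendsto (fun y : ℝ => y * Real.exp (-y)) atTop (nhds 0) := by
    simpa using Real.tendsto_pow_mul_exp_neg_atTop_nhds_zero 1
  have h1 : Tendsto (fun y : ℝ => -((y+1)/a^2 * Real.exp (-y))) atTop (nhds 0) := by
    have := ((hA.add Real.tendsto_exp_neg_atTop_nhds_zero).div_const (a^2)).neg
    simp only [add_zero, neg_zero, zero_div] at this
    exact this.congr fun y => by ring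
  have h3 : Tendsto (fun x : ℝ => a * x) atTop atTop :=
    Tendsto.const_mul_atTop ha tendsto_id
  refine (h1.comp h3).congr fun x => ?_
  have ha' : a ≠ 0 := ha.ne'
  simp only [Function.comp]
  rw [show (a*x+1)/a^2 = x/a + 1/a^2 by field_simp]

lemma exp_deriv_aux (a x : ℝ) :
    HasDerivAt (fun x : ℝ => Real.exp (-(a*x))) (-a * Real.exp (-(a*x))) x := by
  have : HasDerivAt (fun x : ℝ => -(a*x)) (-a) x := by
    have := ((hasDerivAt_id x).const_mul a).neg
    simp only [id_eq, mul_one] at this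
    exact this
  simpa [mul_comm] using this.exp

lemma intB_deriv (a : ℝ) (ha : 0 < a) (x : ℝ) :
    HasDerivAt (fun x : ℝ => -((x/a + 1/a^2) * Real.exp (-(a*x))))
      (x * Real.exp (-(a*x))) x := by
  have h1 : HasDerivAt (fun x : ℝ => x/a + 1/a^2) (1/a) x := by
    have := ((hasDerivAt_id x).div_const a).add_const (1/a^2)
    simp only [id_eq] at this
    exact this
  have := (h1.mul (exp_deriv_aux a x)).neg
  refine this.congr_deriv ?_
  field_simp
  ring

lemma intB (a c : ℝ) (ha : 0 < a) (hc : 0 ≤ c) :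
    ∫ x in Ioi c, x * Real.exp (-(a*x)) = (c/a + 1/a^2) * Real.exp (-(a*c)) := by
  have := integral_Ioi_of_hasDerivAt_of_nonneg' (g' := fun x => x * Real.exp (-(a*x)))
    (fun x _ => intB_deriv a ha x)
    (fun x hx => mul_nonneg (hc.trans (le_of_lt hx)) (Real.exp_pos _).le)
    (tendB a ha)
  rw [this]; ring

lemma intB_int (a c : ℝ) (ha : 0 < a) (hc : 0 ≤ c) :
    IntegrableOn (fun x => x * Real.exp (-(a*x))) (Ioi c) := by
  exact integrableOn_Ioi_deriv_of_nonneg' (fun x _ => intB_deriv a ha x)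
    (fun x hx => mul_nonneg (hc.trans (le_of_lt hx)) (Real.exp_pos _).le)
    (tendB a ha)

lemma intA_deriv (a : ℝ) (ha : 0 < a) (x : ℝ) :
    HasDerivAt (fun x : ℝ => -(Real.exp (-(a*x))/a)) (Real.exp (-(a*x))) x := by
  have := ((exp_deriv_aux a x).div_const a).neg
  refine this.congr_deriv ?_
  field_simp

lemma intA_tend (a : ℝ) (ha : 0 < a) :
    Tendsto (fun x : ℝ => -(Real.exp (-(a*x))/a)) atTop (nhds 0) := by
  have h3 : Tendsto (fun x : ℝ => a * x) atTop atTop :=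
    Tendsto.const_mul_atTop ha tendsto_id
  have := ((Real.tendsto_exp_neg_atTop_nhds_zero.comp h3).div_const a).neg
  simpa [Function.comp] using this

lemma intA (a c : ℝ) (ha : 0 < a) :
    ∫ x in Ioi c, Real.exp (-(a*x)) = Real.exp (-(a*c))/a := by
  have := integral_Ioi_of_hasDerivAt_of_nonneg' (a := c) (g' := fun x => Real.exp (-(a*x)))
    (fun x _ => intA_deriv a ha x)
    (fun x _ => (Real.exp_pos _).le)
    (intA_tend a ha)
  rw [this]; ring

lemma intA_int (a c : ℝ) (ha : 0 < a) :
    IntegrableOn (fun x => Real.exp (-(a*x))) (Ioi c) := by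
  exact integrableOn_Ioi_deriv_of_nonneg' (a := c) (fun x _ => intA_deriv a ha x)
    (fun x _ => (Real.exp_pos _).le)
    (intA_tend a ha)

lemma measurable_G : Measurable G := by
  unfold G
  exact Measurable.ite measurableSet_Ici
    (measurable_const.sub (Real.measurable_exp.comp measurable_neg)) measurable_const

lemma G_nonneg (z : ℝ) : 0 ≤ G z := by
  unfold G; split
  · simp only [sub_nonneg]
    exact Real.exp_le_one_iff.mpr (by linarith)
  · exact le_refl 0

lemma G_le_one (z : ℝ) : G z ≤ 1 := by
  unfold G; split
  · nlinarith [Real.exp_pos (-z)]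
  · norm_num

lemma epdf_eq (x : ℝ) : exponentialPDFReal 1 x = if 0 ≤ x then Real.exp (-x) else 0 := by
  unfold exponentialPDFReal gammaPDFReal
  simp [Real.Gamma_one]

lemma expMeasure_eq : expMeasure 1 =
    volume.withDensity (fun x => ((Real.toNNReal (exponentialPDFReal 1 x) : ℝ≥0) : ℝ≥0∞)) := by
  rfl

lemma integral_expM (f : ℝ → ℝ) (hf : Measurable f) :
    ∫ x, f x ∂(expMeasure 1) = ∫ x in Ioi 0, f x * Real.exp (-x) := by
  rw [expMeasure_eq, integral_withDensity_eq_integral_smul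
    ((measurable_exponentialPDFReal 1).real_toNNReal) f]
  have : (fun x => Real.toNNReal (exponentialPDFReal 1 x) • f x)
      = Set.indicator (Ici 0) (fun x => f x * Real.exp (-x)) := by
    funext x
    rw [NNReal.smul_def, Real.coe_toNNReal _ (exponentialPDFReal_nonneg one_pos x), epdf_eq]
    by_cases hx : 0 ≤ x
    · simp [hx, Set.indicator_of_mem (mem_Ici.mpr hx), mul_comm]
    · simp [hx, Set.indicator_of_notMem hx]
  rw [this, integral_indicator measurableSet_Ici, integral_Ici_eq_integral_Ioi]

lemma expMeasure_Iic (c : ℝ) : expMeasure 1 (Iic c) = ENNReal.ofReal (G c) := by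
  have hp : IsProbabilityMeasure (expMeasure 1) := isProbabilityMeasure_expMeasure one_pos
  rw [← ofReal_cdf (expMeasure 1) c]
  congr 1
  have h2 : cdf (expMeasure 1) c = if 0 ≤ c then 1 - Real.exp (-(1 * c)) else 0 :=
    cdf_expMeasure_eq one_pos c
  rw [h2]
  unfold G
  simp

lemma integrable_expM (f : ℝ → ℝ) (hf : Measurable f)
    (hb : IntegrableOn (fun x => f x * Real.exp (-x)) (Ioi 0)) :
    Integrable f (expMeasure 1) := by
  rw [expMeasure_eq, integrable_withDensity_iff
    (((measurable_exponentialPDFReal 1).real_toNNReal).coe_nnreal_ennreal) --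

    (Filter.Eventually.of_forall fun x => ENNReal.coe_lt_top)]
  have : (fun x => f x * ((Real.toNNReal (exponentialPDFReal 1 x) : ℝ≥0∞)).toReal)
      = Set.indicator (Ici 0) (fun x => f x * Real.exp (-x)) := by
    funext x
    rw [ENNReal.coe_toReal, Real.coe_toNNReal _ (exponentialPDFReal_nonneg one_pos x), epdf_eq]
    by_cases hx : 0 ≤ x
    · simp [hx, Set.indicator_of_mem (mem_Ici.mpr hx)]
    · simp [hx, Set.indicator_of_notMem hx]
  rw [this, integrable_indicator_iff measurableSet_Ici]
  rwa [← integrableOn_Ici_iff_integrableOn_Ioi] at hb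
lemma G_nonpos {z : ℝ} (hz : z ≤ 0) : G z = 0 := by
  unfold G; split
  · have : z = 0 := le_antisymm hz (by assumption)
    simp [this]
  · rfl

lemma c0 : ∫ x, x ∂(expMeasure 1) = 1 := by
  rw [integral_expM (fun x => x) measurable_id]
  rw [setIntegral_congr_fun measurableSet_Ioi
    (g := fun x : ℝ => x * Real.exp (-(1*x))) (fun x _ => by norm_num)]
  rw [intB 1 0 one_pos le_rfl]; norm_num

lemma c1 : ∫ x, G x ∂(expMeasure 1) = 1/2 := by
  rw [integral_expM G measurable_G]
  rw [setIntegral_congr_fun measurableSet_Ioi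
    (g := fun x : ℝ => Real.exp (-(1*x)) - Real.exp (-(2*x)))
    (fun x hx => by
      beta_reduce
      rw [show (-(1*x) : ℝ) = -x from by ring, show (-(2*x) : ℝ) = -x + -x from by ring,
        Real.exp_add]
      simp only [G, if_pos (le_of_lt (mem_Ioi.mp hx))]
      ring)]
  rw [integral_sub (intA_int 1 0 one_pos) (intA_int 2 0 two_pos), intA 1 0 one_pos,
    intA 2 0 two_pos]
  norm_num

lemma c2 : ∫ x, G (x+2) ∂(expMeasure 1) = 1 - Real.exp (-2)/2 := by
  rw [integral_expM (fun x => G (x+2)) (measurable_G.comp (measurable_id.add_const 2))]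
  rw [setIntegral_congr_fun measurableSet_Ioi
    (g := fun x : ℝ => Real.exp (-(1*x)) - Real.exp (-2) * Real.exp (-(2*x)))
    (fun x hx => by
      have h0 : (0:ℝ) ≤ x + 2 := by have := mem_Ioi.mp hx; linarith
      beta_reduce
      rw [show (-(1*x) : ℝ) = -x from by ring, show (-(2*x) : ℝ) = -x + -x from by ring,
        Real.exp_add]
      simp only [G, if_pos h0, show (-(x+2) : ℝ) = -2 + -x from by ring, Real.exp_add]
      ring)]
  rw [integral_sub (intA_int 1 0 one_pos) ((intA_int 2 0 two_pos).const_mul _),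
    intA 1 0 one_pos, integral_const_mul, intA 2 0 two_pos]
  norm_num
  ring

lemma c3 : ∫ x, G (x-2) ∂(expMeasure 1) = Real.exp (-2)/2 := by
  rw [integral_expM (fun x => G (x-2)) (measurable_G.comp (measurable_id.sub_const 2))]
  have hind : (fun x : ℝ => G (x-2) * Real.exp (-x))
      = Set.indicator (Ioi 2) (fun x => Real.exp (-(1*x)) - Real.exp 2 * Real.exp (-(2*x))) := by
    funext x
    by_cases h2 : 2 < x
    · have h0 : (0:ℝ) ≤ x - 2 := by linarith
      rw [Set.indicator_of_mem (mem_Ioi.mpr h2)]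
      rw [show (-(1*x) : ℝ) = -x from by ring, show (-(2*x) : ℝ) = -x + -x from by ring,
        Real.exp_add]
      simp only [G, if_pos h0, show (-(x-2) : ℝ) = 2 + -x from by ring, Real.exp_add]
      ring
    · rw [Set.indicator_of_notMem (by simpa using h2), G_nonpos (by linarith), zero_mul]
  rw [hind, setIntegral_indicator measurableSet_Ioi,
    show Ioi (0:ℝ) ∩ Ioi 2 = Ioi 2 by rw [Ioi_inter_Ioi]; norm_num]
  rw [integral_sub (intA_int 1 2 one_pos) ((intA_int 2 2 two_pos).const_mul _),
    intA 1 2 one_pos, integral_const_mul, intA 2 2 two_pos]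
  rw [show (-(1*2) : ℝ) = -2 by norm_num, show (-(2*2) : ℝ) = -4 by norm_num,
    show Real.exp 2 * (Real.exp (-4)/2) = (Real.exp 2 * Real.exp (-4))/2 by ring,
    ← Real.exp_add]
  norm_num
  ring

lemma c4 : ∫ x, x * G x ∂(expMeasure 1) = 3/4 := by
  rw [integral_expM (fun x => x * G x) (measurable_id.mul measurable_G)]
  rw [setIntegral_congr_fun measurableSet_Ioi
    (g := fun x : ℝ => x * Real.exp (-(1*x)) - x * Real.exp (-(2*x)))
    (fun x hx => by
      beta_reduce
      rw [show (-(1*x) : ℝ) = -x from by ring, show (-(2*x) : ℝ) = -x + -x from by ring,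
        Real.exp_add]
      simp only [G, if_pos (le_of_lt (mem_Ioi.mp hx))]
      ring)]
  rw [integral_sub (intB_int 1 0 one_pos le_rfl) (intB_int 2 0 two_pos le_rfl),
    intB 1 0 one_pos le_rfl, intB 2 0 two_pos le_rfl]
  norm_num

lemma c5 : ∫ x, x * G (x+2) ∂(expMeasure 1) = 1 - Real.exp (-2)/4 := by
  rw [integral_expM (fun x => x * G (x+2)) (measurable_id.mul (measurable_G.comp (measurable_id.add_const 2)))]
  rw [setIntegral_congr_fun measurableSet_Ioi
    (g := fun x : ℝ => x * Real.exp (-(1*x)) - Real.exp (-2) * (x * Real.exp (-(2*x))))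
    (fun x hx => by
      have h0 : (0:ℝ) ≤ x + 2 := by have := mem_Ioi.mp hx; linarith
      beta_reduce
      rw [show (-(1*x) : ℝ) = -x from by ring, show (-(2*x) : ℝ) = -x + -x from by ring,
        Real.exp_add]
      simp only [G, if_pos h0, show (-(x+2) : ℝ) = -2 + -x from by ring, Real.exp_add]
      ring)]
  rw [integral_sub (intB_int 1 0 one_pos le_rfl) ((intB_int 2 0 two_pos le_rfl).const_mul _),
    intB 1 0 one_pos le_rfl, integral_const_mul, intB 2 0 two_pos le_rfl]
  norm_num
  ring

lemma c6 : ∫ x, x * G (x-2) ∂(expMeasure 1) = 7/4 * Real.exp (-2) := by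
  rw [integral_expM (fun x => x * G (x-2)) (measurable_id.mul (measurable_G.comp (measurable_id.sub_const 2)))]
  have hind : (fun x : ℝ => x * G (x-2) * Real.exp (-x))
      = Set.indicator (Ioi 2)
        (fun x => x * Real.exp (-(1*x)) - Real.exp 2 * (x * Real.exp (-(2*x)))) := by
    funext x
    by_cases h2 : 2 < x
    · have h0 : (0:ℝ) ≤ x - 2 := by linarith
      rw [Set.indicator_of_mem (mem_Ioi.mpr h2)]
      rw [show (-(1*x) : ℝ) = -x from by ring, show (-(2*x) : ℝ) = -x + -x from by ring,
        Real.exp_add]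
      simp only [G, if_pos h0, show (-(x-2) : ℝ) = 2 + -x from by ring, Real.exp_add]
      ring
    · rw [Set.indicator_of_notMem (by simpa using h2), G_nonpos (by linarith), mul_zero,
        zero_mul]
  rw [show (fun x : ℝ => x * G (x-2) * Real.exp (-x)) = fun x => x * G (x-2) * Real.exp (-x)
    from rfl] at hind
  rw [setIntegral_congr_fun measurableSet_Ioi
    (g := Set.indicator (Ioi 2)
      (fun x => x * Real.exp (-(1*x)) - Real.exp 2 * (x * Real.exp (-(2*x)))))
    (fun x _ => by rw [← hind])]
  rw [setIntegral_indicator measurableSet_Ioi,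
    show Ioi (0:ℝ) ∩ Ioi 2 = Ioi 2 by rw [Ioi_inter_Ioi]; norm_num]
  rw [integral_sub (intB_int 1 2 one_pos (by norm_num))
      ((intB_int 2 2 two_pos (by norm_num)).const_mul _),
    intB 1 2 one_pos (by norm_num), integral_const_mul, intB 2 2 two_pos (by norm_num)]
  rw [show (-(1*2) : ℝ) = -2 by norm_num, show (-(2*2) : ℝ) = -4 by norm_num,
    show Real.exp 2 * ((2/2 + 1/2^2) * Real.exp (-4)) = (5/4) * (Real.exp 2 * Real.exp (-4))
      by ring, ← Real.exp_add]
  norm_num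
  ring

lemma G_abs (z : ℝ) : |G z| ≤ 1 := by
  rw [abs_of_nonneg (G_nonneg z)]; exact G_le_one z

lemma smul_prod'' {α β : Type*} [MeasurableSpace α] [MeasurableSpace β]
    (c : ℝ≥0∞) (m : Measure α) (n : Measure β) [SFinite m] [SFinite n] :
    (c • m).prod n = c • (m.prod n) := by
  ext s hs
  rw [Measure.prod_apply hs, Measure.smul_apply, smul_eq_mul, Measure.prod_apply hs,
    lintegral_smul_measure, smul_eq_mul]

lemma int_id : Integrable (fun x : ℝ => x) (expMeasure 1) := by
  refine integrable_expM _ measurable_id ?_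
  exact (intB_int 1 0 one_pos le_rfl).congr_fun (fun x _ => by norm_num) measurableSet_Ioi

lemma int_bdd (f : ℝ → ℝ) (hf : Measurable f) (hb : ∀ x, |f x| ≤ 1) :
    Integrable f (expMeasure 1) := by
  haveI : IsProbabilityMeasure (expMeasure 1) := isProbabilityMeasure_expMeasure one_pos
  exact (integrable_const 1).mono' hf.aestronglyMeasurable
    (Filter.Eventually.of_forall fun x => by simpa using hb x)

lemma int_lin (f : ℝ → ℝ) (hf : Measurable f) (hb : ∀ x, |f x| ≤ |x|) :
    Integrable f (expMeasure 1) := by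
  exact int_id.abs.mono' hf.aestronglyMeasurable
    (Filter.Eventually.of_forall fun x => by simpa using hb x)

/-- With `X₁` Rademacher, `X₂` exponential(1) independent of `X₁`, `X̂ = (X₁ + X₂)/√2` and `Ŷ = F_X̂(X̂)`, one has `cov(X₂, Ŷ) = (3e⁻² + 1)/8`. -/
theorem stmt_12 {Ω : Type*} [MeasurableSpace Ω] (μ : Measure Ω) [IsProbabilityMeasure μ]
    (X₁ X₂ : Ω → ℝ) (h1meas : Measurable X₁) (h2meas : Measurable X₂)
    (hX1 : μ.map X₁ = (1/2 : ℝ≥0∞) • Measure.dirac 1 + (1/2 : ℝ≥0∞) • Measure.dirac (-1))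
    (hX2 : μ.map X₂ = expMeasure 1)
    (hind : IndepFun X₁ X₂ μ)
    (Xhat : Ω → ℝ) (hXhat : Xhat = fun ω => (X₁ ω + X₂ ω) / Real.sqrt 2)
    (Yhat : Ω → ℝ) (hYhat : Yhat = fun ω => cdf (μ.map Xhat) (Xhat ω)) :
    (∫ ω, X₂ ω * Yhat ω ∂μ) - (∫ ω, X₂ ω ∂μ) * (∫ ω, Yhat ω ∂μ) = (3 * Real.exp (-2) + 1) / 8 := by
  have hs2 : (0:ℝ) < Real.sqrt 2 := Real.sqrt_pos.mpr two_pos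
  haveI hprob : IsProbabilityMeasure (expMeasure 1) := isProbabilityMeasure_expMeasure one_pos
  -- the joint law
  have hpair : μ.map (fun ω => (X₁ ω, X₂ ω))
      = (1/2 : ℝ≥0∞) • (expMeasure 1).map (Prod.mk (1:ℝ))
        + (1/2 : ℝ≥0∞) • (expMeasure 1).map (Prod.mk (-1:ℝ)) := by
    rw [(indepFun_iff_map_prod_eq_prod_map_map h1meas.aemeasurable h2meas.aemeasurable).mp hind,
      hX1, hX2, Measure.add_prod, smul_prod'', smul_prod'', Measure.dirac_prod,
      Measure.dirac_prod]
  -- generic integral against the joint law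
  have key : ∀ f : ℝ × ℝ → ℝ, Measurable f →
      Integrable (fun b => f (1, b)) (expMeasure 1) →
      Integrable (fun b => f (-1, b)) (expMeasure 1) →
      ∫ ω, f (X₁ ω, X₂ ω) ∂μ
        = ((∫ b, f (1, b) ∂(expMeasure 1)) + (∫ b, f (-1, b) ∂(expMeasure 1))) / 2 := by
    intro f hf hi1 hi2
    have m1 : Integrable f ((expMeasure 1).map (Prod.mk (1:ℝ))) :=
      (integrable_map_measure hf.aestronglyMeasurable
        measurable_prodMk_left.aemeasurable).mpr hi1
    have m2 : Integrable f ((expMeasure 1).map (Prod.mk (-1:ℝ))) :=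
      (integrable_map_measure hf.aestronglyMeasurable
        measurable_prodMk_left.aemeasurable).mpr hi2
    rw [← integral_map (h1meas.prodMk h2meas).aemeasurable hf.aestronglyMeasurable, hpair,
      integral_add_measure (m1.smul_measure (by norm_num)) (m2.smul_measure (by norm_num)),
      integral_smul_measure, integral_smul_measure,
      integral_map measurable_prodMk_left.aemeasurable hf.aestronglyMeasurable,
      integral_map measurable_prodMk_left.aemeasurable hf.aestronglyMeasurable]
    rw [show ((1:ℝ≥0∞)/2).toReal = (1:ℝ)/2 by simp [ENNReal.toReal_div]]
    simp only [smul_eq_mul]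
    ring
  -- the cdf of Xhat
  have hXm : Measurable Xhat := by rw [hXhat]; exact (h1meas.add h2meas).div_const _
  have hgm : Measurable (fun p : ℝ × ℝ => (p.1 + p.2) / Real.sqrt 2) :=
    (measurable_fst.add measurable_snd).div_const _
  have hmapXhat : μ.map Xhat
      = (μ.map (fun ω => (X₁ ω, X₂ ω))).map (fun p : ℝ × ℝ => (p.1 + p.2) / Real.sqrt 2) := by
    rw [Measure.map_map hgm (h1meas.prodMk h2meas)]
    rw [hXhat]; rfl
  have hcdf : ∀ x, cdf (μ.map Xhat) x
      = (G (Real.sqrt 2 * x - 1) + G (Real.sqrt 2 * x + 1)) / 2 := by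
    intro x
    haveI : IsProbabilityMeasure (μ.map Xhat) := Measure.isProbabilityMeasure_map hXm.aemeasurable
    rw [cdf_eq_real, measureReal_def, hmapXhat, hpair]
    rw [Measure.map_apply hgm measurableSet_Iic]
    have hS : MeasurableSet ((fun p : ℝ × ℝ => (p.1 + p.2) / Real.sqrt 2) ⁻¹' Iic x) :=
      hgm measurableSet_Iic
    rw [Measure.add_apply, Measure.smul_apply, Measure.smul_apply,
      Measure.map_apply measurable_prodMk_left hS,
      Measure.map_apply measurable_prodMk_left hS]
    have hset1 : (Prod.mk (1:ℝ) ⁻¹' ((fun p : ℝ × ℝ => (p.1 + p.2) / Real.sqrt 2) ⁻¹' Iic x))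
        = Iic (Real.sqrt 2 * x - 1) := by
      ext b
      simp only [mem_preimage, mem_Iic, div_le_iff₀ hs2]
      constructor <;> intro h <;> nlinarith [mul_comm x (Real.sqrt 2)]
    have hset2 : (Prod.mk (-1:ℝ) ⁻¹' ((fun p : ℝ × ℝ => (p.1 + p.2) / Real.sqrt 2) ⁻¹' Iic x))
        = Iic (Real.sqrt 2 * x + 1) := by
      ext b
      simp only [mem_preimage, mem_Iic, div_le_iff₀ hs2]
      constructor <;> intro h <;> nlinarith [mul_comm x (Real.sqrt 2)]
    rw [hset1, hset2, expMeasure_Iic, expMeasure_Iic, smul_eq_mul, smul_eq_mul]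
    rw [ENNReal.toReal_add (ENNReal.mul_ne_top (by norm_num) ENNReal.ofReal_ne_top)
      (ENNReal.mul_ne_top (by norm_num) ENNReal.ofReal_ne_top),
      ENNReal.toReal_mul, ENNReal.toReal_mul,
      ENNReal.toReal_ofReal (G_nonneg _), ENNReal.toReal_ofReal (G_nonneg _),
      show ((1:ℝ≥0∞)/2).toReal = (1:ℝ)/2 by simp [ENNReal.toReal_div]]
    ring
  -- explicit form of Yhat
  have hYeq : Yhat = fun ω => (G (X₁ ω + X₂ ω - 1) + G (X₁ ω + X₂ ω + 1)) / 2 := by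
    funext ω
    rw [hYhat]
    beta_reduce
    rw [hcdf, hXhat]
    beta_reduce
    rw [show Real.sqrt 2 * ((X₁ ω + X₂ ω) / Real.sqrt 2) = X₁ ω + X₂ ω by
      field_simp]
  -- E[X₂]
  have hE2 : ∫ ω, X₂ ω ∂μ = 1 := by
    have := key (fun p => p.2) measurable_snd (by simpa using int_id) (by simpa using int_id)
    simpa [c0] using this
  -- E[Yhat]
  have hbddf : ∀ u v : ℝ, |(G u + G v)/2| ≤ 1 := by
    intro u v
    rw [abs_le]
    constructor <;> nlinarith [G_nonneg u, G_nonneg v, G_le_one u, G_le_one v]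
  have hEY : ∫ ω, Yhat ω ∂μ = 1/2 := by
    rw [hYeq]
    have hfm : Measurable (fun p : ℝ × ℝ => (G (p.1 + p.2 - 1) + G (p.1 + p.2 + 1)) / 2) :=
      (((measurable_G.comp ((measurable_fst.add measurable_snd).sub_const 1)).add
        (measurable_G.comp ((measurable_fst.add measurable_snd).add_const 1)))).div_const 2
    have hint : ∀ a : ℝ, Integrable
        (fun b => (G (a + b - 1) + G (a + b + 1)) / 2) (expMeasure 1) :=
      fun a => int_bdd _ (((measurable_G.comp ((measurable_const.add measurable_id).sub_const 1)).add
        (measurable_G.comp ((measurable_const.add measurable_id).add_const 1))).div_const 2)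
        (fun b => hbddf _ _)
    have := key (fun p => (G (p.1 + p.2 - 1) + G (p.1 + p.2 + 1)) / 2) hfm
      (by simpa using hint 1) (by simpa using hint (-1))
    rw [this]
    have e1 : (fun b : ℝ => (G (1 + b - 1) + G (1 + b + 1)) / 2)
        = fun b => (G b + G (b + 2)) / 2 := by
      funext b; rw [show (1:ℝ) + b - 1 = b by ring, show (1:ℝ) + b + 1 = b + 2 by ring]
    have e2 : (fun b : ℝ => (G (-1 + b - 1) + G (-1 + b + 1)) / 2)
        = fun b => (G (b - 2) + G b) / 2 := by
      funext b; rw [show (-1:ℝ) + b - 1 = b - 2 by ring, show (-1:ℝ) + b + 1 = b by ring]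
    calc ((∫ b, (G (1 + b - 1) + G (1 + b + 1)) / 2 ∂(expMeasure 1))
          + ∫ b, (G (-1 + b - 1) + G (-1 + b + 1)) / 2 ∂(expMeasure 1)) / 2
        = ((∫ b, (G b + G (b + 2)) / 2 ∂(expMeasure 1))
          + ∫ b, (G (b - 2) + G b) / 2 ∂(expMeasure 1)) / 2 := by rw [e1, e2]
      _ = 1/2 := by
          rw [integral_div, integral_div,
            integral_add (int_bdd (fun b => G b) measurable_G (fun z => G_abs z))
              (int_bdd (fun b => G (b+2)) (measurable_G.comp (measurable_id.add_const 2))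
                (fun z => G_abs _)),
            integral_add (int_bdd (fun b => G (b-2))
                (measurable_G.comp (measurable_id.sub_const 2)) (fun z => G_abs _))
              (int_bdd (fun b => G b) measurable_G (fun z => G_abs z)),
            c1, c2, c3]
          ring
  -- E[X₂ * Yhat]
  have hEXY : ∫ ω, X₂ ω * Yhat ω ∂μ = 5/8 + 3/8 * Real.exp (-2) := by
    rw [hYeq]
    have hfm : Measurable
        (fun p : ℝ × ℝ => p.2 * ((G (p.1 + p.2 - 1) + G (p.1 + p.2 + 1)) / 2)) :=
      measurable_snd.mul
        ((((measurable_G.comp ((measurable_fst.add measurable_snd).sub_const 1)).add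
          (measurable_G.comp ((measurable_fst.add measurable_snd).add_const 1)))).div_const 2)
    have hblin : ∀ (b u v : ℝ), |b * ((G u + G v)/2)| ≤ |b| := by
      intro b u v
      rw [abs_mul]
      exact mul_le_of_le_one_right (abs_nonneg b) (hbddf u v)
    have hint : ∀ a : ℝ, Integrable
        (fun b => b * ((G (a + b - 1) + G (a + b + 1)) / 2)) (expMeasure 1) :=
      fun a => int_lin _ (measurable_id.mul
        (((measurable_G.comp ((measurable_const.add measurable_id).sub_const 1)).add
          (measurable_G.comp ((measurable_const.add measurable_id).add_const 1))).div_const 2))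
        (fun b => hblin _ _ _)
    have hb1 : ∀ b u : ℝ, |b * G u| ≤ |b| := by
      intro b u
      rw [abs_mul]
      exact mul_le_of_le_one_right (abs_nonneg b) (G_abs u)
    have := key (fun p => p.2 * ((G (p.1 + p.2 - 1) + G (p.1 + p.2 + 1)) / 2)) hfm
      (by simpa using hint 1) (by simpa using hint (-1))
    beta_reduce
    rw [this]
    have e1 : (fun b : ℝ => b * ((G (1 + b - 1) + G (1 + b + 1)) / 2))
        = fun b => (b * G b + b * G (b + 2)) / 2 := by
      funext b
      rw [show (1:ℝ) + b - 1 = b by ring, show (1:ℝ) + b + 1 = b + 2 by ring]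
      ring
    have e2 : (fun b : ℝ => b * ((G (-1 + b - 1) + G (-1 + b + 1)) / 2))
        = fun b => (b * G (b - 2) + b * G b) / 2 := by
      funext b
      rw [show (-1:ℝ) + b - 1 = b - 2 by ring, show (-1:ℝ) + b + 1 = b by ring]
      ring
    rw [e1, e2, integral_div, integral_div,
      integral_add (int_lin (fun b => b * G b) (measurable_id.mul measurable_G)
          (fun b => hb1 b b))
        (int_lin (fun b => b * G (b+2))
          (measurable_id.mul (measurable_G.comp (measurable_id.add_const 2)))
          (fun b => hb1 b _)),
      integral_add (int_lin (fun b => b * G (b-2))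
          (measurable_id.mul (measurable_G.comp (measurable_id.sub_const 2)))
          (fun b => hb1 b _))
        (int_lin (fun b => b * G b) (measurable_id.mul measurable_G) (fun b => hb1 b b)),
      c4, c5, c6]
    ring
  rw [hEXY, hE2, hEY]
  ring
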